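/- arXiv:1705.05645 — 3 statements merged into one kernel-verified Lean document; each statement's English description precedes it below -/
import Mathlib

section
/- If (ψ,θ)(τ) is a solution of the collision-manifold system which is not an equilibrium, then the set {τ ∈ ℝ : θ'(τ) = 0} is discrete (isolated) in ℝ. -/
/-!
A zero `τ₀` of `θ' = √(2𝔘(θ)) cos ψ` is a zero of `cos ψ`, so `sin² ψ(τ₀) = 1` and
`(cos ψ)'(τ₀) = -sin ψ(τ₀) · ψ'(τ₀) = 𝔘_θ(θ(τ₀)) / √(2𝔘(θ(τ₀)))`. If `𝔘_θ(θ(τ₀)) = 0`, the vector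
field vanishes at `(ψ, θ)(τ₀)`; it is `C¹`, so by uniqueness of solutions the orbit is that
equilibrium. Otherwise `cos ψ` has a simple zero at `τ₀`, which is isolated.
-/

open Real Set Filter Topology NNReal

theorem ODE_solution_eq_const_of_apply_eq_of_eq_zero {E : Type*} [NormedAddCommGroup E]
    [NormedSpace ℝ E] {V : E → E} {γ : ℝ → E} {p : E} {K : ℝ≥0} {s : Set E} (hs : s ∈ 𝓝 p)
    (hV : LipschitzOnWith K V s) (hp : V p = 0) (hγ : ∀ t, HasDerivAt γ (V (γ t)) t)
    {t₀ : ℝ} (h₀ : γ t₀ = p) (t : ℝ) : γ t = p := by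
  have hγc : Continuous γ := continuous_iff_continuousAt.2 fun t => (hγ t).continuousAt
  have hopen : IsOpen {t | γ t = p} := by
    refine isOpen_iff_mem_nhds.2 fun t₁ (h₁ : γ t₁ = p) => ?_
    have hγs : ∀ᶠ t in 𝓝 t₁, γ t ∈ s := hγc.continuousAt.preimage_mem_nhds (h₁ ▸ hs)
    refine ODE_solution_unique_of_eventually (v := fun _ => V) (s := fun _ => s)
      (.of_forall fun _ => hV) (hγs.mono fun t ht => ⟨hγ t, ht⟩)
      (.of_forall fun t => ⟨hp ▸ hasDerivAt_const t p, mem_of_mem_nhds hs⟩) h₁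
  have hclopen : IsClopen {t | γ t = p} := ⟨isClosed_eq hγc continuous_const, hopen⟩
  exact eq_univ_iff_forall.1 (hclopen.eq_univ ⟨t₀, h₀⟩) t

theorem hasDerivAt_cos_comp_of_cos_eq_zero {ψ : ℝ → ℝ} {a b : ℝ} {t : ℝ}
    (hψ : HasDerivAt ψ (a * cos (ψ t) - b * sin (ψ t)) t) (hc : cos (ψ t) = 0) :
    HasDerivAt (fun s => cos (ψ s)) b t := by
  have hsin : sin (ψ t) ^ 2 = 1 := by nlinarith [sin_sq_add_cos_sq (ψ t)]
  convert hψ.cos using 1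
  linear_combination (-b) * hsin + a * sin (ψ t) * hc

noncomputable def collisionField (α : ℝ) (U : ℝ → ℝ) (p : ℝ × ℝ) : ℝ × ℝ :=
  ((1 - α / 2) * √(2 * U p.2) * cos p.1 - deriv U p.2 * sin p.1 / √(2 * U p.2),
    √(2 * U p.2) * cos p.1)

theorem contDiff_collisionField (α : ℝ) {U : ℝ → ℝ} (hU : ∀ θ, 0 < U θ)
    (hUsm : ContDiff ℝ 2 U) : ContDiff ℝ 1 (collisionField α U) := by
  have hdU : ContDiff ℝ 1 (deriv U) := hUsm.iterate_deriv' 1 1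
  have hsqrt : ContDiff ℝ 1 fun p : ℝ × ℝ => √(2 * U p.2) :=
    (contDiff_const.mul ((hUsm.of_le (by norm_num)).comp contDiff_snd)).sqrt
      fun p => by have := hU p.2; positivity
  have hcos : ContDiff ℝ 1 fun p : ℝ × ℝ => cos p.1 := contDiff_cos.comp contDiff_fst
  have hsin : ContDiff ℝ 1 fun p : ℝ × ℝ => sin p.1 := contDiff_sin.comp contDiff_fst
  exact (((contDiff_const.mul hsqrt).mul hcos).sub (((hdU.comp contDiff_snd).mul hsin).div hsqrt
    fun p => (sqrt_pos.2 (by have := hU p.2; positivity)).ne')).prodMk (hsqrt.mul hcos)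

theorem collision_manifold_theta_zeros_isolated_general
    (α : ℝ)
    (U : ℝ → ℝ) (hU : ∀ θ, 0 < U θ) (hUsm : ContDiff ℝ 2 U)
    (ψ θ : ℝ → ℝ)
    (hψ : ∀ τ, HasDerivAt ψ ((1 - α / 2) * Real.sqrt (2 * U (θ τ)) * Real.cos (ψ τ) -
        deriv U (θ τ) * Real.sin (ψ τ) / Real.sqrt (2 * U (θ τ))) τ)
    (hθ : ∀ τ, HasDerivAt θ (Real.sqrt (2 * U (θ τ)) * Real.cos (ψ τ)) τ)
    (hne : ∃ τ₁ τ₂ : ℝ, (ψ τ₁, θ τ₁) ≠ (ψ τ₂, θ τ₂)) :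
    ∀ τ₀ : ℝ, deriv θ τ₀ = 0 →
      ∃ ε > 0, ∀ τ : ℝ, τ ≠ τ₀ → |τ - τ₀| < ε → deriv θ τ ≠ 0 := by
  intro τ₀ h₀
  have hsqrt : ∀ x, 0 < √(2 * U x) := fun x => sqrt_pos.2 (by have := hU x; positivity)
  have hderiv : ∀ τ, deriv θ τ = 0 ↔ cos (ψ τ) = 0 := fun τ => by
    rw [(hθ τ).deriv, mul_eq_zero, or_iff_right (hsqrt _).ne']
  have hc₀ : cos (ψ τ₀) = 0 := (hderiv τ₀).1 h₀
  have hdU : deriv U (θ τ₀) ≠ 0 := by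
    intro hdU
    obtain ⟨K, s, hs, hV⟩ := ((contDiff_collisionField α hU hUsm).contDiffAt
      (x := (ψ τ₀, θ τ₀))).exists_lipschitzOnWith
    have hconst := ODE_solution_eq_const_of_apply_eq_of_eq_zero hs hV
      (by simp [collisionField, hc₀, hdU]) (fun τ => (hψ τ).prodMk (hθ τ)) rfl
    obtain ⟨τ₁, τ₂, h⟩ := hne
    exact h ((hconst τ₁).trans (hconst τ₂).symm)
  have hcos : HasDerivAt (fun τ => cos (ψ τ)) (deriv U (θ τ₀) / √(2 * U (θ τ₀))) τ₀ :=
    hasDerivAt_cos_comp_of_cos_eq_zero (by simpa only [mul_div_right_comm] using hψ τ₀) hc₀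
  obtain ⟨ε, hε, hisol⟩ := Metric.eventually_nhds_iff.1 <| eventually_nhdsWithin_iff.1 <|
    hcos.eventually_ne (c := 0) (div_ne_zero hdU (hsqrt _).ne')
  exact ⟨ε, hε, fun τ hτ hlt => (hderiv τ).not.2 (hisol (by rwa [Real.dist_eq]) hτ)⟩

/-- for a non-equilibrium solution of the collision-manifold flow,
the zeros of `θ'` are isolated in `ℝ`. -/
theorem collision_manifold_theta_zeros_isolated
    (α : ℝ) (hα : 0 < α) (hα2 : α < 2)
    (U : ℝ → ℝ) (hU : ∀ θ, 0 < U θ) (hUsm : ContDiff ℝ 2 U)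
    (ψ θ : ℝ → ℝ)
    (hψ : ∀ τ, HasDerivAt ψ ((1 - α / 2) * Real.sqrt (2 * U (θ τ)) * Real.cos (ψ τ) -
        deriv U (θ τ) * Real.sin (ψ τ) / Real.sqrt (2 * U (θ τ))) τ)
    (hθ : ∀ τ, HasDerivAt θ (Real.sqrt (2 * U (θ τ)) * Real.cos (ψ τ)) τ)
    (hne : ∃ τ₁ τ₂ : ℝ, (ψ τ₁, θ τ₁) ≠ (ψ τ₂, θ τ₂)) :
    ∀ τ₀ : ℝ, deriv θ τ₀ = 0 →
      ∃ ε > 0, ∀ τ : ℝ, τ ≠ τ₀ → |τ - τ₀| < ε → deriv θ τ ≠ 0 :=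
  collision_manifold_theta_zeros_isolated_general α U hU hUsm ψ θ hψ hθ hne
end

section
/- For an equilibrium (ψ₀, θ₀) with Δ(θ₀) ≥ 0, the vectors e_± = ((2−α)/4 ∓ (sin ψ₀ /2)√(Δ(θ₀)/(2𝔘(θ₀))), 1)ᵀ are eigenvectors of M(ψ₀,θ₀) with respective eigenvalues λ_± = −((2−α)/4)√(2𝔘(θ₀)) sin ψ₀ ± (1/2)√(Δ(θ₀)). -/
/-!
Since `M` has a zero corner, `(x, 1)` is an eigenvector of `M` with eigenvalue `c x` (read off the
second row) as soon as `c x² = a x + b`. For this `M` the quadratic reduces to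
`x² = (1 - α/2) x + 𝔘_θθ / (2𝔘)`, whose two roots are the first entries of `e_±`;
`sin² ψ₀ = 1` then turns `c x` into `λ_±`.
-/

open Real Matrix

theorem Matrix.mulVec_fin_two_corner_zero_eq_smul {R : Type*} [CommRing R] {a b c x : R}
    (h : c * x ^ 2 = a * x + b) :
    !![a, b; c, 0] *ᵥ ![x, 1] = (c * x) • ![x, 1] := by
  ext i
  fin_cases i
  · simp only [mulVec, dotProduct, Fin.zero_eta, Fin.isValue, of_apply, cons_val',
      cons_val_fin_one, cons_val_zero, Fin.sum_univ_two, cons_val_one, mul_one,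
      Nat.succ_eq_add_one, Nat.reduceAdd, Pi.smul_apply, smul_eq_mul]
    linear_combination -h
  · simp [mulVec, dotProduct, Fin.sum_univ_two]

theorem collision_quadratic_of_sq_sub {α s r d Δ x : ℝ} (hr : r ≠ 0)
    (hΔ : Δ = (2 - α) ^ 2 / 4 * r ^ 2 + 4 * d) (hx : (x - (2 - α) / 4) ^ 2 = Δ / (4 * r ^ 2)) :
    -r * s * x ^ 2 = (α / 2 - 1) * r * s * x + -d * s / r := by
  have hmonic : x ^ 2 = (1 - α / 2) * x + d / r ^ 2 := by
    rw [hΔ] at hx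
    field_simp at hx ⊢
    linear_combination hx / 8
  rw [hmonic]
  field_simp
  ring

theorem collision_equilibrium_eigenvectors_general
    (α : ℝ)
    (U : ℝ → ℝ) (θ₀ ψ₀ : ℝ)
    (hU : 0 < U θ₀)
    (hψ : ψ₀ = Real.pi / 2 ∨ ψ₀ = -(Real.pi / 2))
    (M : Matrix (Fin 2) (Fin 2) ℝ)
    (hM : M = !![(α / 2 - 1) * Real.sqrt (2 * U θ₀) * Real.sin ψ₀,
                 -(deriv (deriv U) θ₀) * Real.sin ψ₀ / Real.sqrt (2 * U θ₀);
                 -(Real.sqrt (2 * U θ₀)) * Real.sin ψ₀, 0])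
    (Δ : ℝ) (hΔ : Δ = ((2 - α) ^ 2 / 2) * U θ₀ + 4 * deriv (deriv U) θ₀)
    (hΔnn : 0 ≤ Δ) :
    M.mulVec ![(2 - α) / 4 - (Real.sin ψ₀ / 2) * Real.sqrt (Δ / (2 * U θ₀)), 1] =
      (-(((2 - α) / 4) * Real.sqrt (2 * U θ₀) * Real.sin ψ₀) + (1 / 2) * Real.sqrt Δ) •
        ![(2 - α) / 4 - (Real.sin ψ₀ / 2) * Real.sqrt (Δ / (2 * U θ₀)), 1] ∧
    M.mulVec ![(2 - α) / 4 + (Real.sin ψ₀ / 2) * Real.sqrt (Δ / (2 * U θ₀)), 1] =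
      (-(((2 - α) / 4) * Real.sqrt (2 * U θ₀) * Real.sin ψ₀) - (1 / 2) * Real.sqrt Δ) •
        ![(2 - α) / 4 + (Real.sin ψ₀ / 2) * Real.sqrt (Δ / (2 * U θ₀)), 1] := by
  subst hM
  set s := sin ψ₀
  set r := √(2 * U θ₀)
  set e := √(Δ / (2 * U θ₀))
  have hs : s ^ 2 = 1 := by rcases hψ with rfl | rfl <;> simp [s]
  have hr2 : r ^ 2 = 2 * U θ₀ := sq_sqrt (by positivity)
  have hr : r ≠ 0 := (sqrt_pos.mpr (by positivity)).ne'
  have hre : r * e = √Δ := by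
    rw [← sqrt_mul (by positivity), mul_div_cancel₀ _ (by positivity)]
  have he2 : e ^ 2 = Δ / r ^ 2 := by rw [hr2]; exact sq_sqrt (by positivity)
  have hΔr : Δ = (2 - α) ^ 2 / 4 * r ^ 2 + 4 * deriv (deriv U) θ₀ := by rw [hΔ, hr2]; ring
  constructor
  · rw [show -((2 - α) / 4 * r * s) + 1 / 2 * √Δ = -r * s * ((2 - α) / 4 - s / 2 * e) by
      linear_combination (-1 / 2 * r * e) * hs - 1 / 2 * hre]
    refine mulVec_fin_two_corner_zero_eq_smul (collision_quadratic_of_sq_sub hr hΔr ?_)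
    linear_combination (1 / 4 * e ^ 2) * hs + 1 / 4 * he2
  · rw [show -((2 - α) / 4 * r * s) - 1 / 2 * √Δ = -r * s * ((2 - α) / 4 + s / 2 * e) by
      linear_combination (1 / 2 * r * e) * hs + 1 / 2 * hre]
    refine mulVec_fin_two_corner_zero_eq_smul (collision_quadratic_of_sq_sub hr hΔr ?_)
    linear_combination (1 / 4 * e ^ 2) * hs + 1 / 4 * he2

/-- when `Δ(θ₀) ≥ 0`, the vectors
`e_± = ((2-α)/4 ∓ (sin ψ₀/2)√(Δ/(2𝔘(θ₀))), 1)ᵀ` are eigenvectors of `M(ψ₀,θ₀)`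
with eigenvalues `λ_± = -((2-α)/4)√(2𝔘(θ₀)) sin ψ₀ ± (1/2)√Δ`. -/
theorem collision_equilibrium_eigenvectors
    (α : ℝ) (hα : 0 < α) (hα2 : α < 2)
    (U : ℝ → ℝ) (θ₀ ψ₀ : ℝ)
    (hU : 0 < U θ₀)
    (hψ : ψ₀ = Real.pi / 2 ∨ ψ₀ = -(Real.pi / 2))
    (hcrit : deriv U θ₀ = 0)
    (M : Matrix (Fin 2) (Fin 2) ℝ)
    (hM : M = !![(α / 2 - 1) * Real.sqrt (2 * U θ₀) * Real.sin ψ₀,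
                 -(deriv (deriv U) θ₀) * Real.sin ψ₀ / Real.sqrt (2 * U θ₀);
                 -(Real.sqrt (2 * U θ₀)) * Real.sin ψ₀, 0])
    (Δ : ℝ) (hΔ : Δ = ((2 - α) ^ 2 / 2) * U θ₀ + 4 * deriv (deriv U) θ₀)
    (hΔnn : 0 ≤ Δ) :
    M.mulVec ![(2 - α) / 4 - (Real.sin ψ₀ / 2) * Real.sqrt (Δ / (2 * U θ₀)), 1] =
      (-(((2 - α) / 4) * Real.sqrt (2 * U θ₀) * Real.sin ψ₀) + (1 / 2) * Real.sqrt Δ) •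
        ![(2 - α) / 4 - (Real.sin ψ₀ / 2) * Real.sqrt (Δ / (2 * U θ₀)), 1] ∧
    M.mulVec ![(2 - α) / 4 + (Real.sin ψ₀ / 2) * Real.sqrt (Δ / (2 * U θ₀)), 1] =
      (-(((2 - α) / 4) * Real.sqrt (2 * U θ₀) * Real.sin ψ₀) - (1 / 2) * Real.sqrt Δ) •
        ![(2 - α) / 4 + (Real.sin ψ₀ / 2) * Real.sqrt (Δ / (2 * U θ₀)), 1] :=
  collision_equilibrium_eigenvectors_general α U θ₀ ψ₀ hU hψ M hM Δ hΔ hΔnn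
end

section
/- Let the isosceles three-body effective potential be 𝔘(θ) = m^{5/2}/(√2 |cos θ|) + 2√2 m^{3/2}/(1 + 2m sin²θ)^{1/2} for m > 0 and θ in a neighborhood of 0. Then θ = 0 is a critical point with 𝔘(0) = m^{5/2}/√2 + 2√2 m^{3/2} and 𝔘_{θθ}(0) = −(7/√2) m^{5/2}; consequently, for α = 1, Δ(0) = (1/2)𝔘(0) + 4𝔘_{θθ}(0) is positive if and only if m < 4/55. -/
/-!
Near `θ = 0` the potential is `a (cos θ)⁻¹ + b (1 + c sin²θ)^{-1/2}` with `a = m^{5/2}/√2`,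
`b = 2√2 m^{3/2}`, `c = 2m`. Both summands are even, so `θ = 0` is critical, and their second
derivatives at `0` are `1` and `-c`, giving `𝔘_{θθ}(0) = a - 2m b = -(7/√2) m^{5/2}`.
Writing `m^{5/2} = m · m^{3/2}`, `Δ(0) = (m^{3/2}/√2)(2 - 55m/2)`, whose sign is that of
`4/55 - m`.
-/

open Real Filter Topology

theorem deriv_deriv_eq_of_eventually_hasDerivAt {f f' : ℝ → ℝ} {x f'' : ℝ}
    (hf : ∀ᶠ y in 𝓝 x, HasDerivAt f (f' y) y) (hf' : HasDerivAt f' f'' x) :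
    deriv (deriv f) x = f'' := by
  have h : deriv f =ᶠ[𝓝 x] f' := hf.mono fun _ hy => hy.deriv
  rw [h.deriv_eq, hf'.deriv]

theorem hasDerivAt_inv_cos {θ : ℝ} (hθ : cos θ ≠ 0) :
    HasDerivAt (fun θ => (cos θ)⁻¹) (sin θ / cos θ ^ 2) θ :=
  ((hasDerivAt_cos θ).fun_inv hθ).congr_deriv (by ring)

theorem hasDerivAt_sin_div_cos_sq_zero : HasDerivAt (fun θ => sin θ / cos θ ^ 2) 1 0 :=
  ((hasDerivAt_sin 0).div ((hasDerivAt_cos 0).pow 2) (by simp)).congr_deriv (by simp)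

theorem one_add_mul_sin_sq_pos {c : ℝ} (hc : 0 ≤ c) (θ : ℝ) : 0 < 1 + c * sin θ ^ 2 := by
  positivity

theorem hasDerivAt_one_add_mul_sin_sq_rpow {c : ℝ} (hc : 0 ≤ c) (p θ : ℝ) :
    HasDerivAt (fun θ => (1 + c * sin θ ^ 2) ^ p)
      (2 * c * p * sin θ * cos θ * (1 + c * sin θ ^ 2) ^ (p - 1)) θ := by
  have hq : HasDerivAt (fun θ => 1 + c * sin θ ^ 2) (c * (2 * sin θ * cos θ)) θ := by
    simpa using (((hasDerivAt_sin θ).pow 2).const_mul c).const_add 1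
  exact (hq.rpow_const (Or.inl (one_add_mul_sin_sq_pos hc θ).ne')).congr_deriv (by ring)

theorem hasDerivAt_mul_sin_mul_cos_mul_rpow_zero {c : ℝ} (hc : 0 ≤ c) (k p : ℝ) :
    HasDerivAt (fun θ => k * sin θ * cos θ * (1 + c * sin θ ^ 2) ^ p) k 0 := by
  have h := (((hasDerivAt_sin 0).const_mul k).mul (hasDerivAt_cos 0)).mul
    (hasDerivAt_one_add_mul_sin_sq_rpow hc p 0)
  exact h.congr_deriv (by simp)

noncomputable def effectivePotential (a b c θ : ℝ) : ℝ :=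
  a / |cos θ| + b / √(1 + c * sin θ ^ 2)

section effectivePotential

variable {a b c : ℝ}

theorem effectivePotential_eventuallyEq (hc : 0 ≤ c) {θ : ℝ} (hθ : 0 < cos θ) :
    effectivePotential a b c =ᶠ[𝓝 θ]
      fun θ => a * (cos θ)⁻¹ + b * (1 + c * sin θ ^ 2) ^ (-(1 / 2) : ℝ) := by
  filter_upwards [continuousAt_const.eventually_lt continuous_cos.continuousAt hθ] with θ hθ
  rw [effectivePotential, abs_of_pos hθ, sqrt_eq_rpow,
    rpow_neg (one_add_mul_sin_sq_pos hc θ).le, div_eq_mul_inv, div_eq_mul_inv]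

theorem hasDerivAt_effectivePotential (hc : 0 ≤ c) {θ : ℝ} (hθ : 0 < cos θ) :
    HasDerivAt (effectivePotential a b c)
      (a * (sin θ / cos θ ^ 2) +
        b * (-c * sin θ * cos θ * (1 + c * sin θ ^ 2) ^ (-(3 / 2) : ℝ))) θ := by
  have h := ((hasDerivAt_inv_cos hθ.ne').const_mul a).add
    ((hasDerivAt_one_add_mul_sin_sq_rpow hc (-(1 / 2)) θ).const_mul b)
  refine (h.congr_deriv ?_).congr_of_eventuallyEq (effectivePotential_eventuallyEq hc hθ)
  rw [show -(1 / 2) - 1 = -(3 / 2 : ℝ) by norm_num]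
  ring

theorem deriv_effectivePotential_zero (hc : 0 ≤ c) : deriv (effectivePotential a b c) 0 = 0 := by
  simpa using (hasDerivAt_effectivePotential (a := a) (b := b) hc (θ := 0) (by simp)).deriv

theorem deriv_deriv_effectivePotential_zero (hc : 0 ≤ c) :
    deriv (deriv (effectivePotential a b c)) 0 = a - b * c := by
  have hcos : ∀ᶠ θ in 𝓝 (0 : ℝ), 0 < cos θ :=
    continuousAt_const.eventually_lt continuous_cos.continuousAt (by simp)
  refine deriv_deriv_eq_of_eventually_hasDerivAt
    (hcos.mono fun θ hθ => hasDerivAt_effectivePotential hc hθ) ?_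
  exact ((hasDerivAt_sin_div_cos_sq_zero.const_mul a).add
    ((hasDerivAt_mul_sin_mul_cos_mul_rpow_zero hc (-c) _).const_mul b)).congr_deriv (by ring)

end effectivePotential

theorem rpow_five_halves_eq_mul {m : ℝ} (hm : 0 < m) :
    m ^ ((5 : ℝ) / 2) = m * m ^ ((3 : ℝ) / 2) := by
  rw [show (5 : ℝ) / 2 = 1 + 3 / 2 by norm_num, rpow_add hm, rpow_one]

/-- for the isosceles three-body effective potential
`𝔘(θ) = m^{5/2}/(√2 |cos θ|) + 2√2 m^{3/2}/(1 + 2m sin²θ)^{1/2}`, `θ = 0` is a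
critical point with the stated values of `𝔘(0)` and `𝔘_{θθ}(0)`, and for `α = 1`,
`Δ(0) = (1/2)𝔘(0) + 4𝔘_{θθ}(0) > 0 ↔ m < 4/55`. -/
theorem isosceles_euler_delta
    (m : ℝ) (hm : 0 < m)
    (U : ℝ → ℝ)
    (hUdef : ∀ θ, U θ = m ^ ((5 : ℝ) / 2) / (Real.sqrt 2 * |Real.cos θ|) +
        2 * Real.sqrt 2 * m ^ ((3 : ℝ) / 2) /
          Real.sqrt (1 + 2 * m * Real.sin θ ^ 2)) :
    deriv U 0 = 0 ∧
    U 0 = m ^ ((5 : ℝ) / 2) / Real.sqrt 2 + 2 * Real.sqrt 2 * m ^ ((3 : ℝ) / 2) ∧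
    deriv (deriv U) 0 = -(7 / Real.sqrt 2) * m ^ ((5 : ℝ) / 2) ∧
    (0 < (1 / 2) * U 0 + 4 * deriv (deriv U) 0 ↔ m < 4 / 55) := by
  have hc : (0 : ℝ) ≤ 2 * m := by positivity
  have hU :
      U = effectivePotential (m ^ ((5 : ℝ) / 2) / √2) (2 * √2 * m ^ ((3 : ℝ) / 2)) (2 * m) :=
    funext fun θ => by rw [hUdef, effectivePotential, div_div]
  have hU0 : U 0 = m ^ ((5 : ℝ) / 2) / √2 + 2 * √2 * m ^ ((3 : ℝ) / 2) := by
    simp [hU, effectivePotential]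
  have hs2 : √2 ^ 2 = 2 := sq_sqrt zero_le_two
  have hUθθ : deriv (deriv U) 0 = -(7 / √2) * m ^ ((5 : ℝ) / 2) := by
    rw [hU, deriv_deriv_effectivePotential_zero hc, rpow_five_halves_eq_mul hm]
    field_simp
    linear_combination (-4) * hs2
  have hΔ :
      (1 / 2) * U 0 + 4 * deriv (deriv U) 0 = m ^ ((3 : ℝ) / 2) / √2 * (2 - 55 * m / 2) := by
    rw [hU0, hUθθ, rpow_five_halves_eq_mul hm]
    field_simp
    linear_combination 2 * hs2
  have hpos : 0 < m ^ ((3 : ℝ) / 2) / √2 := by positivity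
  refine ⟨by rw [hU]; exact deriv_effectivePotential_zero hc, hU0, hUθθ, ?_⟩
  rw [hΔ, mul_pos_iff_of_pos_left hpos]
  constructor <;> intro h <;> linarith
end
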